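/- arXiv:1310.1141 — 3 statements merged into one kernel-verified Lean document; each statement's English description precedes it below -/
import Mathlib

section
/- Let U and V be closed subspaces of a Hilbert space H satisfying the subspace condition (cos θ_{U V^⊥} > 0), and suppose dim U = dim V^⊥ = n < ∞. Then U ⊕ V = H. -/
/-! A unit vector of `U ∩ V` would be killed by the projection onto `Vᗮ`, so a positive
cosine forces `U ∩ V = 0`. Hence the projection onto `Vᗮ` restricted to `U` is injective,
and, as `dim U = dim Vᗮ < ∞`, also surjective: every `w ∈ Vᗮ` is `u - (u - P u)` with
`u ∈ U` and `u - P u ∈ V`, so `Vᗮ ≤ U ⊔ V`, and `U ⊔ V ⊇ Vᗮ ⊔ V = H`. -/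

open InnerProductSpace

/-- The cosine of the subspace angle between closed subspaces `A` and `B` of a Hilbert
space: `cos θ_{AB} = inf_{a ∈ A, ‖a‖ = 1} ‖P_B a‖`. -/
noncomputable def cosAngle {H : Type*} [NormedAddCommGroup H] [InnerProductSpace ℂ H]
    (A B : Submodule ℂ H) [B.HasOrthogonalProjection] : ℝ :=
  ⨅ a : {x : H // x ∈ A ∧ ‖x‖ = 1}, ‖((B.orthogonalProjectionOnto (a : H)) : H)‖

namespace Submodule

variable {𝕜 H : Type*} [RCLike 𝕜] [NormedAddCommGroup H] [InnerProductSpace 𝕜 H]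

theorem codisjoint_orthogonal_of_disjoint_of_finrank_eq {U K : Submodule 𝕜 H}
    [FiniteDimensional 𝕜 U] [FiniteDimensional 𝕜 K] (hdisj : Disjoint U Kᗮ)
    (hdim : Module.finrank 𝕜 U = Module.finrank 𝕜 K) : Codisjoint U Kᗮ := by
  let P : U →ₗ[𝕜] K := K.orthogonalProjectionOnto.toLinearMap ∘ₗ U.subtype
  have hP_inj : Function.Injective P := by
    rw [← LinearMap.ker_eq_bot, eq_bot_iff]
    rintro ⟨u, hu⟩ hPu
    have hu_perp : u ∈ Kᗮ := orthogonalProjectionOnto_eq_zero_iff.mp hPu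
    simpa using disjoint_def.mp hdisj u hu hu_perp
  have hP_surj : Function.Surjective P :=
    (LinearMap.injective_iff_surjective_of_finrank_eq_finrank hdim).mp hP_inj
  have hK_le : K ≤ U ⊔ Kᗮ := by
    intro w hw
    obtain ⟨u, hu⟩ := hP_surj ⟨w, hw⟩
    have hPu : K.starProjection u = w := congrArg Subtype.val hu
    have hw_eq : w = u - (u - K.starProjection u) := by rw [hPu]; abel
    rw [hw_eq]
    exact sub_mem (mem_sup_left u.2) (mem_sup_right (sub_starProjection_mem_orthogonal _))
  rw [codisjoint_iff, eq_top_iff, ← sup_orthogonal_of_hasOrthogonalProjection (K := K)]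
  exact sup_le hK_le le_sup_right

end Submodule

theorem cosAngle_le_norm_orthogonalProjectionOnto {H : Type*} [NormedAddCommGroup H]
    [InnerProductSpace ℂ H] {A B : Submodule ℂ H} [B.HasOrthogonalProjection] {a : H}
    (ha : a ∈ A) (ha_norm : ‖a‖ = 1) :
    cosAngle A B ≤ ‖(B.orthogonalProjectionOnto a : H)‖ :=
  ciInf_le ⟨0, fun _ ⟨_, hb⟩ => hb ▸ norm_nonneg _⟩
    (⟨a, ha, ha_norm⟩ : {x : H // x ∈ A ∧ ‖x‖ = 1})

theorem disjoint_orthogonal_of_cosAngle_pos {H : Type*} [NormedAddCommGroup H]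
    [InnerProductSpace ℂ H] {A B : Submodule ℂ H} [B.HasOrthogonalProjection]
    (hcos : 0 < cosAngle A B) : Disjoint A Bᗮ := by
  rw [Submodule.disjoint_def]
  intro x hxA hxB
  by_contra hx
  have hx_norm : ‖x‖ ≠ 0 := norm_ne_zero_iff.mpr hx
  have hunit : ‖(‖x‖⁻¹ : ℂ) • x‖ = 1 := by
    rw [norm_smul, norm_inv, Complex.norm_real, norm_norm, inv_mul_cancel₀ hx_norm]
  have hle := cosAngle_le_norm_orthogonalProjectionOnto (B := B) (A.smul_mem _ hxA) hunit
  rw [Submodule.orthogonalProjectionOnto_eq_zero_iff.mpr (Bᗮ.smul_mem _ hxB)] at hle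
  simp only [ZeroMemClass.coe_zero, norm_zero] at hle
  linarith

theorem isCompl_of_subspace_condition_of_finrank_eq_general
    {H : Type*} [NormedAddCommGroup H] [InnerProductSpace ℂ H]
    (U V : Submodule ℂ H) [CompleteSpace V]
    [FiniteDimensional ℂ U] [FiniteDimensional ℂ Vᗮ] (n : ℕ)
    (hU : Module.finrank ℂ U = n) (hVperp : Module.finrank ℂ Vᗮ = n)
    (hcos : 0 < cosAngle U Vᗮ) :
    IsCompl U V := by
  have hdisj : Disjoint U Vᗮᗮ := disjoint_orthogonal_of_cosAngle_pos hcos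
  have hcodisj : Codisjoint U Vᗮᗮ :=
    Submodule.codisjoint_orthogonal_of_disjoint_of_finrank_eq hdisj (hU.trans hVperp.symm)
  rw [V.orthogonal_orthogonal] at hdisj hcodisj
  exact ⟨hdisj, hcodisj⟩

/-- If closed subspaces `U, V` satisfy the subspace condition `cos θ_{U V^⊥} > 0` and
`dim U = dim V^⊥ = n < ∞`, then `U ⊕ V = H`. -/
theorem isCompl_of_subspace_condition_of_finrank_eq
    {H : Type*} [NormedAddCommGroup H] [InnerProductSpace ℂ H] [CompleteSpace H]
    (U V : Submodule ℂ H) [CompleteSpace U] [CompleteSpace V]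
    [FiniteDimensional ℂ U] [FiniteDimensional ℂ Vᗮ] (n : ℕ)
    (hU : Module.finrank ℂ U = n) (hVperp : Module.finrank ℂ Vᗮ = n)
    (hcos : 0 < cosAngle U Vᗮ) :
    IsCompl U V :=
  isCompl_of_subspace_condition_of_finrank_eq_general U V n hU hVperp hcos
end

section
/- Let U and V be closed subspaces of a Hilbert space H with cos(θ_{U V^⊥}) > 0 and dim U = dim V^⊥ = n < ∞. Then cos(θ_{V^⊥ U}) ≥ cos(θ_{U V^⊥}) > 0. -/
open InnerProductSpace

/-!
Let `T = P_{Vᗮ}|_U : U → Vᗮ` and `c = cos θ_{U Vᗮ}`. Since `c ‖a‖ ≤ ‖T a‖`, `c > 0` makes `T`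
injective, hence bijective as `dim U = dim Vᗮ`. For a unit vector `b = T a ∈ Vᗮ`, self-adjointness
of the projections gives `1 = ‖b‖² = ⟪P_U b, a⟫ ≤ ‖P_U b‖ ‖a‖`, while `c ‖a‖ ≤ ‖b‖ = 1`; hence
`c ≤ ‖P_U b‖`, and taking the infimum over `b` gives `c ≤ cos θ_{Vᗮ U}`.
-/

section
variable {H : Type*} [NormedAddCommGroup H] [InnerProductSpace ℂ H] {A B : Submodule ℂ H}

theorem cosAngle_nonneg [B.HasOrthogonalProjection] : 0 ≤ cosAngle A B :=
  Real.iInf_nonneg fun _ ↦ norm_nonneg _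

theorem cosAngle_le_norm_starProjection [B.HasOrthogonalProjection] {a : H} (ha : a ∈ A)
    (ha₁ : ‖a‖ = 1) : cosAngle A B ≤ ‖B.starProjection a‖ :=
  ciInf_le ⟨0, by rintro _ ⟨_, rfl⟩; positivity⟩ (⟨a, ha, ha₁⟩ : {x : H // x ∈ A ∧ ‖x‖ = 1})

theorem cosAngle_mul_norm_le [B.HasOrthogonalProjection] {a : H} (ha : a ∈ A) :
    cosAngle A B * ‖a‖ ≤ ‖B.starProjection a‖ := by
  rcases eq_or_ne a 0 with rfl | ha₀
  · simp
  have hpos : 0 < ‖a‖ := norm_pos_iff.mpr ha₀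
  have hunit : ‖(‖a‖⁻¹ : ℂ) • a‖ = 1 := by
    rw [norm_smul, norm_inv, Complex.norm_real, Real.norm_of_nonneg hpos.le,
      inv_mul_cancel₀ hpos.ne']
  have := cosAngle_le_norm_starProjection (B := B) (A.smul_mem _ ha) hunit
  rw [map_smul, norm_smul, norm_inv, Complex.norm_real, Real.norm_of_nonneg hpos.le] at this
  rwa [le_inv_mul_iff₀ hpos, mul_comm] at this

theorem le_cosAngle [B.HasOrthogonalProjection] [Nontrivial A] {c : ℝ}
    (h : ∀ a ∈ A, ‖a‖ = 1 → c ≤ ‖B.starProjection a‖) : c ≤ cosAngle A B := by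
  obtain ⟨a, ha⟩ := exists_norm_eq A zero_le_one
  have : Nonempty {x : H // x ∈ A ∧ ‖x‖ = 1} := ⟨⟨a, a.2, ha⟩⟩
  exact le_ciInf fun a ↦ h a a.2.1 a.2.2

theorem nontrivial_of_cosAngle_pos [B.HasOrthogonalProjection] (h : 0 < cosAngle A B) :
    Nontrivial A := by
  by_contra hA
  rw [not_nontrivial_iff_subsingleton] at hA
  have : IsEmpty {x : H // x ∈ A ∧ ‖x‖ = 1} :=
    ⟨fun ⟨x, hx, hx₁⟩ ↦ by
      simp [show x = 0 from congrArg Subtype.val (Subsingleton.elim (⟨x, hx⟩ : A) 0)] at hx₁⟩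
  simp [cosAngle, iInf_of_isEmpty] at h

theorem injective_orthogonalProjectionOnto_comp_subtype_of_cosAngle_pos [B.HasOrthogonalProjection]
    (h : 0 < cosAngle A B) :
    Function.Injective ((B.orthogonalProjectionOnto : H →ₗ[ℂ] B) ∘ₗ A.subtype) := by
  refine (injective_iff_map_eq_zero _).mpr fun a ha ↦ ?_
  have hPa : B.starProjection a = 0 := congrArg Subtype.val ha
  have hle := cosAngle_mul_norm_le (B := B) a.2
  rw [hPa, norm_zero] at hle
  exact Subtype.ext <| norm_le_zero_iff.mp <| (mul_nonpos_iff_pos_imp_nonpos.mp hle).1 h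

theorem norm_starProjection_sq_le [A.HasOrthogonalProjection] [B.HasOrthogonalProjection]
    {a : H} (ha : a ∈ A) :
    ‖B.starProjection a‖ ^ 2 ≤ ‖A.starProjection (B.starProjection a)‖ * ‖a‖ := by
  have hinner : ⟪B.starProjection a, a⟫_ℂ = ⟪A.starProjection (B.starProjection a), a⟫_ℂ := by
    rw [A.inner_starProjection_left_eq_right, Submodule.starProjection_eq_self_iff.mpr ha]
  calc ‖B.starProjection a‖ ^ 2 = RCLike.re ⟪B.starProjection a, a⟫_ℂ :=
        (B.re_inner_starProjection_eq_normSq a).symm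
    _ ≤ ‖⟪A.starProjection (B.starProjection a), a⟫_ℂ‖ := hinner ▸ RCLike.re_le_norm _
    _ ≤ _ := norm_inner_le_norm _ _

theorem cosAngle_le_cosAngle_swap_of_surjective [A.HasOrthogonalProjection]
    [B.HasOrthogonalProjection] [Nontrivial B]
    (h : Function.Surjective ((B.orthogonalProjectionOnto : H →ₗ[ℂ] B) ∘ₗ A.subtype)) :
    cosAngle A B ≤ cosAngle B A := by
  refine le_cosAngle fun b hb hb₁ ↦ ?_
  obtain ⟨a, hab⟩ := h ⟨b, hb⟩
  have hab : B.starProjection a = b := congrArg Subtype.val hab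
  have h₁ := cosAngle_mul_norm_le (B := B) a.2
  have h₂ := norm_starProjection_sq_le (B := B) a.2
  rw [hab, hb₁] at h₁ h₂
  calc cosAngle A B ≤ cosAngle A B * (‖A.starProjection b‖ * ‖(a : H)‖) :=
        le_mul_of_one_le_right cosAngle_nonneg (by simpa using h₂)
    _ = ‖A.starProjection b‖ * (cosAngle A B * ‖(a : H)‖) := by ring
    _ ≤ ‖A.starProjection b‖ := mul_le_of_le_one_right (norm_nonneg _) h₁

end

theorem cosAngle_swap_ge_general
    {H : Type*} [NormedAddCommGroup H] [InnerProductSpace ℂ H]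
    (U V : Submodule ℂ H)
    [FiniteDimensional ℂ U] [FiniteDimensional ℂ Vᗮ] (n : ℕ)
    (hU : Module.finrank ℂ U = n) (hVperp : Module.finrank ℂ Vᗮ = n)
    (hcos : 0 < cosAngle U Vᗮ) :
    cosAngle U Vᗮ ≤ cosAngle Vᗮ U ∧ 0 < cosAngle Vᗮ U := by
  have hinj := injective_orthogonalProjectionOnto_comp_subtype_of_cosAngle_pos hcos
  have hsurj := (LinearMap.injective_iff_surjective_of_finrank_eq_finrank
    (hU.trans hVperp.symm)).mp hinj
  have := nontrivial_of_cosAngle_pos hcos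
  have := hinj.nontrivial
  have hle := cosAngle_le_cosAngle_swap_of_surjective hsurj
  exact ⟨hle, hcos.trans_le hle⟩

/-- If `cos θ_{U V^⊥} > 0` and `dim U = dim V^⊥ = n < ∞`, then
`cos θ_{V^⊥ U} ≥ cos θ_{U V^⊥} > 0`. -/
theorem cosAngle_swap_ge
    {H : Type*} [NormedAddCommGroup H] [InnerProductSpace ℂ H] [CompleteSpace H]
    (U V : Submodule ℂ H) [CompleteSpace U] [CompleteSpace V]
    [FiniteDimensional ℂ U] [FiniteDimensional ℂ Vᗮ] (n : ℕ)
    (hU : Module.finrank ℂ U = n) (hVperp : Module.finrank ℂ Vᗮ = n)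
    (hcos : 0 < cosAngle U Vᗮ) :
    cosAngle U Vᗮ ≤ cosAngle Vᗮ U ∧ 0 < cosAngle Vᗮ U :=
  cosAngle_swap_ge_general U V n hU hVperp hcos
end

section
/- Let U and V be closed subspaces of a Hilbert space H satisfying the subspace condition, let f ∈ H₀ := U ⊕ V, and consider the variational problem: find g ∈ U such that ⟨g, w⟩ = ⟨f, w⟩ for all w ∈ V^⊥. This problem has a unique solution, and it equals the oblique projection P_{UV} f. -/
open InnerProductSpace

/-! Since `Vᗮᗮ = V` for a complete subspace `V`, the variational condition on `g` says exactly
`f - g ∈ V`. Its solutions in `U` are therefore the `U`-components of `f ∈ U ⊕ V`, and these are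
unique because `U ⊓ V = 0`. -/

theorem Submodule.eq_of_sub_mem_of_sub_mem_of_disjoint {R M : Type*} [Ring R] [AddCommGroup M]
    [Module R M] {U V : Submodule R M} (h : Disjoint U V) {f g₁ g₂ : M} (hg₁ : g₁ ∈ U)
    (hg₂ : g₂ ∈ U) (hfg₁ : f - g₁ ∈ V) (hfg₂ : f - g₂ ∈ V) : g₁ = g₂ := by
  have hV : g₁ - g₂ ∈ V := by simpa using V.sub_mem hfg₂ hfg₁
  exact sub_eq_zero.mp (Submodule.disjoint_def.mp h _ (U.sub_mem hg₁ hg₂) hV)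

theorem Submodule.forall_inner_orthogonal_eq_iff_sub_mem {𝕜 E : Type*} [RCLike 𝕜]
    [NormedAddCommGroup E] [InnerProductSpace 𝕜 E] (K : Submodule 𝕜 E)
    [K.HasOrthogonalProjection] (f g : E) :
    (∀ w ∈ Kᗮ, inner 𝕜 g w = inner 𝕜 f w) ↔ f - g ∈ K := by
  conv_rhs => rw [← K.orthogonal_orthogonal]
  simp only [Kᗮ.mem_orthogonal', inner_sub_left, sub_eq_zero, eq_comm]

open scoped ComplexInnerProductSpace in
theorem variational_problem_unique_solution_general
    {H : Type*} [NormedAddCommGroup H] [InnerProductSpace ℂ H]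
    (U V : Submodule ℂ H) [CompleteSpace V]
    (hmeet : U ⊓ V = ⊥)
    (f : H) (hf : f ∈ U ⊔ V) :
    (∃! g : H, g ∈ U ∧ ∀ w ∈ Vᗮ, ⟪g, w⟫ = ⟪f, w⟫) ∧
      ∀ g u v : H, g ∈ U → (∀ w ∈ Vᗮ, ⟪g, w⟫ = ⟪f, w⟫) →
        u ∈ U → v ∈ V → f = u + v → g = u := by
  have eq_component : ∀ g u v : H, g ∈ U → (∀ w ∈ Vᗮ, ⟪g, w⟫ = ⟪f, w⟫) →
      u ∈ U → v ∈ V → f = u + v → g = u := by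
    rintro g u v hg hgf hu hv rfl
    exact Submodule.eq_of_sub_mem_of_sub_mem_of_disjoint (disjoint_iff.mpr hmeet) hg hu
      ((V.forall_inner_orthogonal_eq_iff_sub_mem _ g).mp hgf) (by simpa using hv)
  obtain ⟨u, hu, v, hv, rfl⟩ := Submodule.mem_sup.mp hf
  have hu_sol : ∀ w ∈ Vᗮ, ⟪u, w⟫ = ⟪u + v, w⟫ :=
    (V.forall_inner_orthogonal_eq_iff_sub_mem _ u).mpr (by simpa using hv)
  exact ⟨⟨u, ⟨hu, hu_sol⟩, fun g ⟨hg, hgf⟩ ↦ eq_component g u v hg hgf hu hv rfl⟩, eq_component⟩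

open scoped ComplexInnerProductSpace in
/-- Variational characterization of the oblique projection: for `f ∈ H₀ = U ⊕ V`, the problem
"find `g ∈ U` with `⟨g, w⟩ = ⟨f, w⟩` for all `w ∈ V^⊥`" has a unique solution, which equals the
oblique projection `P_{UV} f`, i.e. the `U`-component of `f` in the decomposition `f = u + v`. -/
theorem variational_problem_unique_solution
    {H : Type*} [NormedAddCommGroup H] [InnerProductSpace ℂ H] [CompleteSpace H]
    (U V : Submodule ℂ H) [CompleteSpace U] [CompleteSpace V]
    (hmeet : U ⊓ V = ⊥) (hsum : IsClosed ((U ⊔ V : Submodule ℂ H) : Set H))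
    (f : H) (hf : f ∈ U ⊔ V) :
    (∃! g : H, g ∈ U ∧ ∀ w ∈ Vᗮ, ⟪g, w⟫ = ⟪f, w⟫) ∧
      ∀ g u v : H, g ∈ U → (∀ w ∈ Vᗮ, ⟪g, w⟫ = ⟪f, w⟫) →
        u ∈ U → v ∈ V → f = u + v → g = u :=
  variational_problem_unique_solution_general U V hmeet f hf
end
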